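/- With the hypotheses and notation of the transport construction applied to two elements: if u, v ∈ M satisfy x^u, x^v ∈ S_x and u ∧ v = 1, then the associated sequences satisfy u_i ∧ v_i = 1 for all i = 0,…,r. -/

import Mathlib

namespace GarsideFormal

variable (G : Type*) [Group G]

/-- An atom of the submonoid `M`: a nontrivial element admitting no nontrivial
factorization inside `M`. -/
def IsMAtom (M : Submonoid G) (a : G) : Prop :=
  a ∈ M ∧ a ≠ 1 ∧ ∀ b ∈ M, ∀ c ∈ M, a = b * c → b = 1 ∨ c = 1

/-- A Garside monoid `M`, realized as a submonoid (positive cone) of its group of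
fractions `G`, together with its Garside element `δ`, left gcd and left lcm
operations (extended to `G`), and the cycling operation `cyc`. -/
structure Garside where
  M : Submonoid G
  δ : G
  gcd : G → G → G
  lcm : G → G → G
  cyc : G → G
  δ_mem : δ ∈ M
  /-- `G` is the group of fractions of `M`. -/
  fractions : ∀ g : G, ∃ a ∈ M, ∃ b ∈ M, g = a⁻¹ * b
  /-- `M` is generated by its atoms. -/
  atoms_generate : Submonoid.closure {a : G | IsMAtom G M a} = M
  /-- Atomicity: bounded factorization lengths into atoms. -/
  atomic_bound : ∀ a ∈ M, ∃ N : ℕ, ∀ L : List G,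
      (∀ b ∈ L, IsMAtom G M b) → L.prod = a → L.length ≤ N
  /-- Left divisors of `δ` coincide with right divisors of `δ`. -/
  divs_eq : {x : G | x ∈ M ∧ x⁻¹ * δ ∈ M} = {x : G | x ∈ M ∧ δ * x⁻¹ ∈ M}
  divs_finite : Set.Finite {x : G | x ∈ M ∧ x⁻¹ * δ ∈ M}
  divs_generate : Submonoid.closure {x : G | x ∈ M ∧ x⁻¹ * δ ∈ M} = M
  gcd_dvd_left : ∀ a b : G, (gcd a b)⁻¹ * a ∈ M
  gcd_dvd_right : ∀ a b : G, (gcd a b)⁻¹ * b ∈ M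
  gcd_greatest : ∀ a b x : G, x⁻¹ * a ∈ M → x⁻¹ * b ∈ M → x⁻¹ * gcd a b ∈ M
  lcm_dvd_left : ∀ a b : G, a⁻¹ * lcm a b ∈ M
  lcm_dvd_right : ∀ a b : G, b⁻¹ * lcm a b ∈ M
  lcm_least : ∀ a b x : G, a⁻¹ * x ∈ M → b⁻¹ * x ∈ M → (lcm a b)⁻¹ * x ∈ M
  /-- Cycling: if `k = inf x` then `cyc x = x ^ (τ⁻ᵏ A₁)` where `A₁ = δ ∧ δ⁻ᵏ x`
  is the first factor of the left normal form of `x` (when `len x = 0` this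
  gcd is `1` and `cyc x = x`). -/
  cyc_spec : ∀ (x : G) (k : ℤ),
      ((δ ^ k)⁻¹ * x ∈ M ∧ ∀ j : ℤ, (δ ^ j)⁻¹ * x ∈ M → j ≤ k) →
      cyc x = (δ ^ k * gcd δ ((δ ^ k)⁻¹ * x) * (δ ^ k)⁻¹)⁻¹ * x *
              (δ ^ k * gcd δ ((δ ^ k)⁻¹ * x) * (δ ^ k)⁻¹)

variable {G}

namespace Garside

variable (S : Garside G)

/-- Left divisibility `a ≼ b`. -/
def dvd (a b : G) : Prop := a⁻¹ * b ∈ S.M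

/-- Simple elements: the (left) divisors of `δ` in `M`. -/
def Simple (a : G) : Prop := a ∈ S.M ∧ a⁻¹ * S.δ ∈ S.M

/-- `k` is the infimum of `x`: maximal with `δ^k ≼ x`. -/
def IsInf (x : G) (k : ℤ) : Prop :=
  (S.δ ^ k)⁻¹ * x ∈ S.M ∧ ∀ j : ℤ, (S.δ ^ j)⁻¹ * x ∈ S.M → j ≤ k

/-- `s` is the supremum of `x`: minimal with `x ≼ δ^s`. -/
def IsSup (x : G) (s : ℤ) : Prop :=
  x⁻¹ * S.δ ^ s ∈ S.M ∧ ∀ j : ℤ, x⁻¹ * S.δ ^ j ∈ S.M → s ≤ j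

/-- `y` lies in the super summit set of `x`: `y` is conjugate to `x`, with
maximal infimum and minimal supremum among all conjugates of `x`. -/
def InSS (x y : G) : Prop :=
  IsConj x y ∧
  (∃ k : ℤ, S.IsInf y k ∧ ∀ z : G, IsConj x z → ∀ k' : ℤ, S.IsInf z k' → k' ≤ k) ∧
  (∃ s : ℤ, S.IsSup y s ∧ ∀ z : G, IsConj x z → ∀ s' : ℤ, S.IsSup z s' → s ≤ s')

/-- `y` lies in the ultra summit set of `x`: it is in the super summit set and
periodic under cycling. -/
def InUS (x y : G) : Prop :=
  S.InSS x y ∧ ∃ n : ℕ, 0 < n ∧ S.cyc^[n] y = y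

/-- `τ^k(z) = δ⁻ᵏ z δᵏ`, where `τ : z ↦ δ⁻¹zδ`. -/
def tauPow (k : ℤ) (z : G) : G := (S.δ ^ k)⁻¹ * z * S.δ ^ k

end Garside

/-- The ordered product `A (i+1) * A (i+2) * ⋯ * A r`. -/
def prodSeg (A : ℕ → G) (i r : ℕ) : G :=
  ((List.range (r - i)).map (fun j => A (i + 1 + j))).prod

namespace Garside

variable (S : Garside G)

/-- `x` has left normal form `δ^k A₁ ⋯ A_r`: each `Aᵢ` is a nontrivial simple
element and `(Aᵢ⁻¹ δ) ∧ A_{i+1} = 1`. -/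
def IsNormalForm (x : G) (k : ℤ) (r : ℕ) (A : ℕ → G) : Prop :=
  x = S.δ ^ k * prodSeg A 0 r ∧
  (∀ i, 1 ≤ i → i ≤ r → S.Simple (A i) ∧ A i ≠ 1) ∧
  (∀ i, 1 ≤ i → i < r → S.gcd ((A i)⁻¹ * S.δ) (A (i + 1)) = 1)

/-- The sequence `u₀, …, u_r` of the transport construction for `(x, u)`,
where `x` has normal form `δ^k A₁ ⋯ A_r`:
`u₀ = τᵏ(u)`, `u_r = u`, and `uᵢ = (A_{i+1} ⋯ A_r u) ∧ δ·τ(Aᵢ⁻¹ u_{i-1})`. -/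
def IsTransportSeq (k : ℤ) (r : ℕ) (A : ℕ → G) (u : G) (useq : ℕ → G) : Prop :=
  useq 0 = S.tauPow k u ∧ useq r = u ∧
  ∀ i, 1 ≤ i → i ≤ r →
    useq i = S.gcd (prodSeg A i r * u) (S.δ * S.tauPow 1 ((A i)⁻¹ * useq (i - 1)))

/-- The transport `φ_x(u) = τ⁻ᵏ(u₁) = τ⁻ᵏ(A₁⁻¹ · τᵏ(u) · (δ ∧ δ⁻ᵏ(x^u)))`,
where `k = inf x` and `A₁ = δ ∧ δ⁻ᵏ x`. -/
def transp (k : ℤ) (x u : G) : G :=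
  S.δ ^ k *
    ((S.gcd S.δ ((S.δ ^ k)⁻¹ * x))⁻¹ * S.tauPow k u *
      S.gcd S.δ ((S.δ ^ k)⁻¹ * (u⁻¹ * x * u))) * (S.δ ^ k)⁻¹

end Garside

namespace Garside

variable {G : Type*} [Group G] (S : Garside G)

lemma tau_mem {m : G} (hm : m ∈ S.M) : S.δ⁻¹ * m * S.δ ∈ S.M := by
  rw [← S.divs_generate] at hm
  induction hm using Submonoid.closure_induction with
  | mem s hs =>
      obtain ⟨hs1, hs2⟩ := hs
      have ht : s⁻¹ * S.δ ∈ {x : G | x ∈ S.M ∧ S.δ * x⁻¹ ∈ S.M} := by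
        refine ⟨hs2, ?_⟩
        have h : S.δ * (s⁻¹ * S.δ)⁻¹ = s := by group
        rw [h]; exact hs1
      rw [← S.divs_eq] at ht
      have h2 : (s⁻¹ * S.δ)⁻¹ * S.δ = S.δ⁻¹ * s * S.δ := by group
      have := ht.2
      rwa [h2] at this
  | one => simpa using S.M.one_mem
  | mul a b _ _ ha hb =>
      have h : S.δ⁻¹ * (a * b) * S.δ = (S.δ⁻¹ * a * S.δ) * (S.δ⁻¹ * b * S.δ) := by group
      rw [h]; exact S.M.mul_mem ha hb

lemma tau_inv_mem {m : G} (hm : m ∈ S.M) : S.δ * m * S.δ⁻¹ ∈ S.M := by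
  rw [← S.divs_generate] at hm
  induction hm using Submonoid.closure_induction with
  | mem s hs =>
      have hs' : s ∈ {x : G | x ∈ S.M ∧ S.δ * x⁻¹ ∈ S.M} := by rw [← S.divs_eq]; exact hs
      have hr : S.δ * s⁻¹ ∈ {x : G | x ∈ S.M ∧ x⁻¹ * S.δ ∈ S.M} := by
        refine ⟨hs'.2, ?_⟩
        have h : (S.δ * s⁻¹)⁻¹ * S.δ = s := by group
        rw [h]; exact hs'.1
      rw [S.divs_eq] at hr
      have h2 : S.δ * (S.δ * s⁻¹)⁻¹ = S.δ * s * S.δ⁻¹ := by group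
      have := hr.2
      rwa [h2] at this
  | one => simpa using S.M.one_mem
  | mul a b _ _ ha hb =>
      have h : S.δ * (a * b) * S.δ⁻¹ = (S.δ * a * S.δ⁻¹) * (S.δ * b * S.δ⁻¹) := by group
      rw [h]; exact S.M.mul_mem ha hb

lemma tauPow_mem (k : ℤ) {m : G} (hm : m ∈ S.M) : (S.δ ^ k)⁻¹ * m * S.δ ^ k ∈ S.M := by
  induction k using Int.induction_on with
  | zero => simpa using hm
  | succ n ih =>
      have h : (S.δ ^ ((n : ℤ) + 1))⁻¹ * m * S.δ ^ ((n : ℤ) + 1)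
          = S.δ⁻¹ * ((S.δ ^ (n : ℤ))⁻¹ * m * S.δ ^ (n : ℤ)) * S.δ := by
        rw [zpow_add_one]; group
      rw [h]; exact S.tau_mem ih
  | pred n ih =>
      have h : (S.δ ^ (-(n : ℤ) - 1))⁻¹ * m * S.δ ^ (-(n : ℤ) - 1)
          = S.δ * ((S.δ ^ (-(n : ℤ)))⁻¹ * m * S.δ ^ (-(n : ℤ))) * S.δ⁻¹ := by
        rw [zpow_sub_one]; group
      rw [h]; exact S.tau_inv_mem ih

lemma units_triv {a : G} (ha : a ∈ S.M) (hai : a⁻¹ ∈ S.M) : a = 1 := by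
  by_contra hne
  obtain ⟨N, hN⟩ := S.atomic_bound a ha
  have hcl : a ∈ Submonoid.closure {b : G | IsMAtom G S.M b} := by
    rw [S.atoms_generate]; exact ha
  have hcl' : a⁻¹ ∈ Submonoid.closure {b : G | IsMAtom G S.M b} := by
    rw [S.atoms_generate]; exact hai
  obtain ⟨L, hL, hLp⟩ := Submonoid.exists_list_of_mem_closure hcl
  obtain ⟨L', hL', hLp'⟩ := Submonoid.exists_list_of_mem_closure hcl'
  have hLne : 1 ≤ L.length := by
    rcases L with _ | ⟨x, L⟩
    · exact absurd hLp.symm (by simpa using hne)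
    · simp
  have key : ∀ n : ℕ, ∃ Ln : List G, (∀ b ∈ Ln, IsMAtom G S.M b) ∧ Ln.prod = a ∧ n ≤ Ln.length := by
    intro n
    induction n with
    | zero => exact ⟨L, hL, hLp, Nat.zero_le _⟩
    | succ n ih =>
        obtain ⟨Ln, h1, h2, h3⟩ := ih
        refine ⟨Ln ++ (L' ++ L), ?_, ?_, ?_⟩
        · intro b hb
          rcases List.mem_append.1 hb with hb | hb
          · exact h1 b hb
          · rcases List.mem_append.1 hb with hb | hb
            · exact hL' b hb
            · exact hL b hb
        · rw [List.prod_append, List.prod_append, h2, hLp, hLp']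
          group
        · simp only [List.length_append]
          omega
  obtain ⟨Ln, h1, h2, h3⟩ := key (N + 1)
  have := hN Ln h1 h2
  omega

lemma gcd_mem {a b : G} (ha : a ∈ S.M) (hb : b ∈ S.M) : S.gcd a b ∈ S.M := by
  have := S.gcd_greatest a b 1 (by simpa using ha) (by simpa using hb)
  simpa using this

lemma gcd_eq_one {a b : G} (ha : a ∈ S.M) (hb : b ∈ S.M)
    (h : (S.gcd a b)⁻¹ ∈ S.M) : S.gcd a b = 1 :=
  S.units_triv (S.gcd_mem ha hb) h

end Garside

lemma prodSeg_self {G : Type*} [Group G] (A : ℕ → G) (r : ℕ) : prodSeg A r r = 1 := by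
  simp [prodSeg]

lemma prodSeg_succ {G : Type*} [Group G] (A : ℕ → G) {i r : ℕ} (h : i < r) :
    prodSeg A i r = A (i + 1) * prodSeg A (i + 1) r := by
  have h1 : r - i = (r - (i + 1)) + 1 := by omega
  have h2 : (fun j => A (i + 1 + Nat.succ j)) = (fun j => A (i + 1 + 1 + j)) := by
    funext j; congr 1; omega
  simp only [prodSeg, h1, List.range_succ_eq_map, List.map_cons, List.map_map,
    List.prod_cons, Nat.add_zero, Function.comp_def]
  rw [h2]

lemma prodSeg_mem {G : Type*} [Group G] (S : Garside G) {A : ℕ → G} {r : ℕ}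
    (hA : ∀ j, 1 ≤ j → j ≤ r → A j ∈ S.M) (i : ℕ) : prodSeg A i r ∈ S.M := by
  apply Submonoid.list_prod_mem
  intro x hx
  simp only [List.mem_map, List.mem_range] at hx
  obtain ⟨j, hj, rfl⟩ := hx
  exact hA _ (by omega) (by omega)

lemma head_div {G : Type*} [Group G] (S : Garside G) {r : ℕ} {A : ℕ → G}
    (hA : ∀ i, 1 ≤ i → i ≤ r → S.Simple (A i) ∧ A i ≠ 1)
    (hN : ∀ i, 1 ≤ i → i < r → S.gcd ((A i)⁻¹ * S.δ) (A (i + 1)) = 1) :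
    ∀ n i, 1 ≤ i → i ≤ r → r - i = n → ∀ c : G,
      c⁻¹ * S.δ ∈ S.M → c⁻¹ * (A i * prodSeg A i r) ∈ S.M → c⁻¹ * A i ∈ S.M := by
  intro n
  induction n with
  | zero =>
      intro i h1 h2 h3 c hcδ hcP
      have hir : i = r := by omega
      subst hir
      rwa [prodSeg_self, mul_one] at hcP
  | succ n ih =>
      intro i h1 h2 h3 c hcδ hcP
      have hir : i < r := by omega
      obtain ⟨hAim, hAid⟩ : A i ∈ S.M ∧ (A i)⁻¹ * S.δ ∈ S.M := (hA i h1 h2).1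
      have hPmem : prodSeg A i r ∈ S.M :=
        prodSeg_mem S (fun j hj1 hj2 => (hA j hj1 hj2).1.1) i
      set c' := S.lcm (A i) c with hc'
      have hc'1 : (A i)⁻¹ * c' ∈ S.M := S.lcm_dvd_left _ _
      have hc'2 : c⁻¹ * c' ∈ S.M := S.lcm_dvd_right _ _
      have hc'δ : c'⁻¹ * S.δ ∈ S.M := S.lcm_least _ _ _ hAid hcδ
      have hc'P : c'⁻¹ * (A i * prodSeg A i r) ∈ S.M := by
        refine S.lcm_least _ _ _ ?_ hcP
        have h : (A i)⁻¹ * (A i * prodSeg A i r) = prodSeg A i r := by group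
        rw [h]; exact hPmem
      set e := (A i)⁻¹ * c' with he
      have he1 : e⁻¹ * ((A i)⁻¹ * S.δ) ∈ S.M := by
        have h : e⁻¹ * ((A i)⁻¹ * S.δ) = c'⁻¹ * S.δ := by rw [he]; group
        rw [h]; exact hc'δ
      have he2 : e⁻¹ * (A (i + 1) * prodSeg A (i + 1) r) ∈ S.M := by
        have h : e⁻¹ * (A (i + 1) * prodSeg A (i + 1) r)
            = c'⁻¹ * (A i * prodSeg A i r) := by
          rw [prodSeg_succ A hir, he]; group
        rw [h]; exact hc'P
      have heδ : e⁻¹ * S.δ ∈ S.M := by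
        have h : e⁻¹ * S.δ = (e⁻¹ * ((A i)⁻¹ * S.δ)) * (S.δ⁻¹ * A i * S.δ) := by group
        rw [h]; exact S.M.mul_mem he1 (S.tau_mem hAim)
      have hind : e⁻¹ * A (i + 1) ∈ S.M :=
        ih (i + 1) (by omega) (by omega) (by omega) e heδ he2
      have hgg : e⁻¹ * S.gcd ((A i)⁻¹ * S.δ) (A (i + 1)) ∈ S.M :=
        S.gcd_greatest _ _ _ he1 hind
      rw [hN i h1 hir, mul_one] at hgg
      have heq : e = 1 := S.units_triv hc'1 hgg
      have hc'A : c' = A i := by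
        rw [he, inv_mul_eq_one] at heq
        exact heq.symm
      rw [← hc'A]; exact hc'2

/-- In the transport construction applied to `u` and `v`, if `u ∧ v = 1` then
`uᵢ ∧ vᵢ = 1` for all `i`. -/
theorem transport_seq_gcd_one {G : Type*} [Group G] (S : Garside G)
    (x u v : G) (k : ℤ) (r : ℕ) (A : ℕ → G)
    (hr : 1 ≤ r) (hnf : S.IsNormalForm x k r A) (hx : S.InSS x x)
    (hu : u ∈ S.M) (hv : v ∈ S.M)
    (hxu : S.InSS x (u⁻¹ * x * u)) (hxv : S.InSS x (v⁻¹ * x * v))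
    (useq vseq : ℕ → G)
    (hus : S.IsTransportSeq k r A u useq) (hvs : S.IsTransportSeq k r A v vseq)
    (hgcd : S.gcd u v = 1) :
    ∀ i, i ≤ r → S.gcd (useq i) (vseq i) = 1 := by
  obtain ⟨-, hA, hNn⟩ := hnf
  obtain ⟨hu0, hur, hust⟩ := hus
  obtain ⟨hv0, hvr, hvst⟩ := hvs
  have hAmem : ∀ j, 1 ≤ j → j ≤ r → A j ∈ S.M := fun j h1 h2 => (hA j h1 h2).1.1
  -- positivity of the transport sequences
  have hmemseq : ∀ (w : G) (wseq : ℕ → G), w ∈ S.M →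
      wseq 0 = S.tauPow k w →
      (∀ j, 1 ≤ j → j ≤ r → wseq j = S.gcd (prodSeg A j r * w)
        (S.δ * S.tauPow 1 ((A j)⁻¹ * wseq (j - 1)))) →
      ∀ i, i ≤ r → wseq i ∈ S.M := by
    intro w wseq hw h0 hst i
    induction i with
    | zero =>
        intro _
        rw [h0]
        exact S.tauPow_mem k hw
    | succ i ih =>
        intro hle
        have hi := hst (i + 1) (by omega) hle
        rw [Nat.add_sub_cancel] at hi
        rw [hi]
        apply S.gcd_mem
        · exact S.M.mul_mem (prodSeg_mem S hAmem _) hw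
        · have h : S.δ * S.tauPow 1 ((A (i + 1))⁻¹ * wseq i)
              = ((A (i + 1))⁻¹ * S.δ) * (S.δ⁻¹ * wseq i * S.δ) := by
            simp only [Garside.tauPow, zpow_one]; group
          rw [h]
          exact S.M.mul_mem (hA (i + 1) (by omega) hle).1.2 (S.tau_mem (ih (by omega)))
  have humem := hmemseq u useq hu hu0 hust
  have hvmem := hmemseq v vseq hv hv0 hvst
  intro i
  induction i with
  | zero =>
      intro _
      set d := S.gcd (useq 0) (vseq 0) with hd
      have hdm : d ∈ S.M := S.gcd_mem (humem 0 (by omega)) (hvmem 0 (by omega))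
      have hx1 : (S.δ ^ k * d * (S.δ ^ k)⁻¹)⁻¹ * u ∈ S.M := by
        have h : (S.δ ^ k * d * (S.δ ^ k)⁻¹)⁻¹ * u
            = (S.δ ^ (-k))⁻¹ * (d⁻¹ * useq 0) * S.δ ^ (-k) := by
          rw [hu0]; simp only [Garside.tauPow]; group
        rw [h]; exact S.tauPow_mem (-k) (S.gcd_dvd_left _ _)
      have hx2 : (S.δ ^ k * d * (S.δ ^ k)⁻¹)⁻¹ * v ∈ S.M := by
        have h : (S.δ ^ k * d * (S.δ ^ k)⁻¹)⁻¹ * v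
            = (S.δ ^ (-k))⁻¹ * (d⁻¹ * vseq 0) * S.δ ^ (-k) := by
          rw [hv0]; simp only [Garside.tauPow]; group
        rw [h]; exact S.tauPow_mem (-k) (S.gcd_dvd_right _ _)
      have hg := S.gcd_greatest u v _ hx1 hx2
      rw [hgcd, mul_one] at hg
      have hdinv : d⁻¹ ∈ S.M := by
        have h := S.tauPow_mem k hg
        rwa [show (S.δ ^ k)⁻¹ * (S.δ ^ k * d * (S.δ ^ k)⁻¹)⁻¹ * S.δ ^ k = d⁻¹ by group] at h
      exact S.units_triv hdm hdinv
  | succ i ih =>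
      intro hle
      have hiu := hust (i + 1) (by omega) hle
      have hiv := hvst (i + 1) (by omega) hle
      rw [Nat.add_sub_cancel] at hiu hiv
      have hargu : S.δ * S.tauPow 1 ((A (i + 1))⁻¹ * useq i)
          = (A (i + 1))⁻¹ * useq i * S.δ := by
        simp only [Garside.tauPow, zpow_one]; group
      have hargv : S.δ * S.tauPow 1 ((A (i + 1))⁻¹ * vseq i)
          = (A (i + 1))⁻¹ * vseq i * S.δ := by
        simp only [Garside.tauPow, zpow_one]; group
      rw [hargu] at hiu
      rw [hargv] at hiv
      set B := A (i + 1) with hB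
      set P := prodSeg A (i + 1) r with hP
      set d := S.gcd (useq (i + 1)) (vseq (i + 1)) with hd
      have hdm : d ∈ S.M := S.gcd_mem (humem _ hle) (hvmem _ hle)
      have hd1u : d⁻¹ * (P * u) ∈ S.M := by
        have h : d⁻¹ * (P * u) = (d⁻¹ * useq (i + 1)) * ((useq (i + 1))⁻¹ * (P * u)) := by
          group
        rw [h]
        exact S.M.mul_mem (S.gcd_dvd_left _ _) (by rw [hiu]; exact S.gcd_dvd_left _ _)
      have hd1v : d⁻¹ * (P * v) ∈ S.M := by
        have h : d⁻¹ * (P * v) = (d⁻¹ * vseq (i + 1)) * ((vseq (i + 1))⁻¹ * (P * v)) := by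
          group
        rw [h]
        exact S.M.mul_mem (S.gcd_dvd_right _ _) (by rw [hiv]; exact S.gcd_dvd_left _ _)
      have hd2u : d⁻¹ * (B⁻¹ * useq i * S.δ) ∈ S.M := by
        have h : d⁻¹ * (B⁻¹ * useq i * S.δ)
            = (d⁻¹ * useq (i + 1)) * ((useq (i + 1))⁻¹ * (B⁻¹ * useq i * S.δ)) := by group
        rw [h]
        exact S.M.mul_mem (S.gcd_dvd_left _ _) (by rw [hiu]; exact S.gcd_dvd_right _ _)
      have hd2v : d⁻¹ * (B⁻¹ * vseq i * S.δ) ∈ S.M := by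
        have h : d⁻¹ * (B⁻¹ * vseq i * S.δ)
            = (d⁻¹ * vseq (i + 1)) * ((vseq (i + 1))⁻¹ * (B⁻¹ * vseq i * S.δ)) := by group
        rw [h]
        exact S.M.mul_mem (S.gcd_dvd_right _ _) (by rw [hiv]; exact S.gcd_dvd_right _ _)
      -- Claim 1 : d ≼ P
      have hclaim1 : d⁻¹ * P ∈ S.M := by
        have h1 : (P⁻¹ * d)⁻¹ * u ∈ S.M := by
          rwa [show (P⁻¹ * d)⁻¹ * u = d⁻¹ * (P * u) by group]
        have h2 : (P⁻¹ * d)⁻¹ * v ∈ S.M := by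
          rwa [show (P⁻¹ * d)⁻¹ * v = d⁻¹ * (P * v) by group]
        have h := S.gcd_greatest u v _ h1 h2
        rw [hgcd, mul_one] at h
        rwa [show (P⁻¹ * d)⁻¹ = d⁻¹ * P by group] at h
      -- Claim 2 : B * d ≼ δ
      set c := B * d with hc
      have hcm : c ∈ S.M := S.M.mul_mem (hAmem (i + 1) (by omega) hle) hdm
      have hz1 : (c * S.δ⁻¹)⁻¹ * useq i ∈ S.M := by
        have h : (c * S.δ⁻¹)⁻¹ * useq i
            = S.δ * (d⁻¹ * (B⁻¹ * useq i * S.δ)) * S.δ⁻¹ := by rw [hc]; group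
        rw [h]; exact S.tau_inv_mem hd2u
      have hz2 : (c * S.δ⁻¹)⁻¹ * vseq i ∈ S.M := by
        have h : (c * S.δ⁻¹)⁻¹ * vseq i
            = S.δ * (d⁻¹ * (B⁻¹ * vseq i * S.δ)) * S.δ⁻¹ := by rw [hc]; group
        rw [h]; exact S.tau_inv_mem hd2v
      have hz := S.gcd_greatest (useq i) (vseq i) _ hz1 hz2
      rw [ih (by omega), mul_one] at hz
      have hδc : S.δ * c⁻¹ ∈ S.M := by
        rwa [show (c * S.δ⁻¹)⁻¹ = S.δ * c⁻¹ by group] at hz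
      have hcright : c ∈ {x : G | x ∈ S.M ∧ S.δ * x⁻¹ ∈ S.M} := ⟨hcm, hδc⟩
      rw [← S.divs_eq] at hcright
      have hcδ : c⁻¹ * S.δ ∈ S.M := hcright.2
      have hcP : c⁻¹ * (B * P) ∈ S.M := by
        rwa [show c⁻¹ * (B * P) = d⁻¹ * P by rw [hc]; group]
      have hhead : c⁻¹ * A (i + 1) ∈ S.M :=
        head_div S hA hNn (r - (i + 1)) (i + 1) (by omega) hle rfl c hcδ hcP
      have hdinv : d⁻¹ ∈ S.M := by
        rw [hc] at hhead
        rwa [show (B * d)⁻¹ * A (i + 1) = d⁻¹ * (B⁻¹ * A (i + 1)) by group, hB,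
          inv_mul_cancel, mul_one] at hhead
      exact S.units_triv hdm hdinv

end GarsideFormal
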